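/- arXiv:1203.0273 — 4 statements merged into one kernel-verified Lean document; each statement's English description precedes it below -/
import Mathlib

section
/- If Λ is an ordered abelian group of finite rank and 𝔬 : ℝ → Λ is an order-preserving (injective) group homomorphism, then 𝔬 has a left inverse: there exists a group homomorphism φ : Λ → ℝ such that φ ∘ 𝔬 = id. -/
/-- `y` is infinitely larger than `x` in the ordered abelian group `Λ`. -/
def InfinitelyLarger {Λ : Type*} [AddCommGroup Λ] [LinearOrder Λ] [IsOrderedAddMonoid Λ] (x y : Λ) : Prop :=
  ∀ n : ℕ, n • |x| < |y|

/-- Archimedean equivalence of elements of an ordered abelian group. -/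
def ArchEquiv {Λ : Type*} [AddCommGroup Λ] [LinearOrder Λ] [IsOrderedAddMonoid Λ] (x y : Λ) : Prop :=
  ¬ InfinitelyLarger x y ∧ ¬ InfinitelyLarger y x

/-- An ordered abelian group has finite rank: the nonzero elements fall into
finitely many archimedean equivalence classes. -/
def FiniteRank (Λ : Type*) [AddCommGroup Λ] [LinearOrder Λ] [IsOrderedAddMonoid Λ] : Prop :=
  ∃ S : Finset Λ, ∀ x : Λ, x ≠ 0 → ∃ y ∈ S, ArchEquiv x y

/-! Since `ℝ` is divisible, Baer's criterion makes it an injective `ℤ`-module, so the identity of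
`ℝ` extends along the injective homomorphism `𝔬` to a homomorphism `Λ →+ ℝ`. -/

theorem AddMonoidHom.exists_leftInverse_of_injective_of_divisible
    {A B : Type*} [AddCommGroup A] [AddCommGroup B] [DivisibleBy A ℤ]
    (f : A →+ B) (hf : Function.Injective f) : ∃ φ : B →+ A, ∀ a, φ (f a) = a := by
  obtain ⟨φ, hφ⟩ :=
    (Module.Baer.of_divisible A).extension_property_addMonoidHom f hf (AddMonoidHom.id A)
  exact ⟨φ, fun a => DFunLike.congr_fun hφ a⟩

theorem left_inverse_of_orderPreserving_real_embedding_general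
    {Λ : Type*} [AddCommGroup Λ] [LinearOrder Λ]
    (𝔬 : ℝ →+ Λ) (h𝔬 : StrictMono 𝔬) :
    ∃ φ : Λ →+ ℝ, ∀ x : ℝ, φ (𝔬 x) = x :=
  𝔬.exists_leftInverse_of_injective_of_divisible h𝔬.injective

/-- If `Λ` is an ordered abelian group of finite rank and `𝔬 : ℝ → Λ` is an
order-preserving (hence injective) group homomorphism, then `𝔬` has a left inverse:
a group homomorphism `φ : Λ → ℝ` with `φ ∘ 𝔬 = id`. -/
theorem left_inverse_of_orderPreserving_real_embedding
    {Λ : Type*} [AddCommGroup Λ] [LinearOrder Λ] [IsOrderedAddMonoid Λ] (hΛ : FiniteRank Λ)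
    (𝔬 : ℝ →+ Λ) (h𝔬 : StrictMono 𝔬) :
    ∃ φ : Λ →+ ℝ, ∀ x : ℝ, φ (𝔬 x) = x :=
  left_inverse_of_orderPreserving_real_embedding_general 𝔬 h𝔬
end

section
/- Let 𝔬 : ℝ → ℝⁿ be an order-preserving group homomorphism, where ℝⁿ carries the lexicographic order, and let a = 𝔬(1) with k = min { i | aᵢ > 0 }. Then for every t ∈ ℝ, the first k−1 coordinates of 𝔬(t) vanish, and for t > 0 the k-th coordinate of 𝔬(t) is strictly positive. -/
/-!
Additivity forces `𝔬 q = q • 𝔬 1` for rational `q`, and `𝔬 0 = 0 ≤ 𝔬 1` together with the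
minimality of `k` makes `𝔬 1`, hence every `𝔬 q`, vanish before `k`. A lexicographic order
interval whose endpoints agree on an initial segment consists of vectors agreeing with them
there, so squeezing `𝔬 t` between `𝔬 q₁` and `𝔬 q₂` for rationals `q₁ < t < q₂` gives the
vanishing for all `t`. For `0 < q < t`, the vectors `𝔬 q ≤ 𝔬 t` then agree before `k`, so
their `k`-th coordinates compare: `0 < q * 𝔬 1 k ≤ 𝔬 t k`.
-/

namespace Pi

variable {ι : Type*} {β : ι → Type*} [LinearOrder ι] [∀ i, LinearOrder (β i)]
  {x y z : ∀ i, β i} {k : ι}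

theorem apply_eq_of_toLex_le_of_forall_apply_le (hxy : toLex x ≤ toLex y)
    (hyx : ∀ i < k, y i ≤ x i) : ∀ i < k, x i = y i := by
  rcases hxy.lt_or_eq with ⟨j, hxyj, hj⟩ | hxy
  · have hkj : k ≤ j := not_lt.mp fun hjk => (hyx j hjk).not_gt hj
    exact fun i hi => hxyj i (hi.trans_le hkj)
  · exact fun i _ => congrFun (toLex_inj.mp hxy) i

theorem apply_eq_of_toLex_le_of_le (hxy : toLex x ≤ toLex y) (hyz : toLex y ≤ toLex z)
    (hxz : ∀ i < k, x i = z i) : ∀ i < k, x i = y i := by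
  rcases hxy.lt_or_eq with ⟨j, hxyj, hj⟩ | hxy
  · have hkj : k ≤ j := by
      by_contra! hjk
      refine hyz.not_gt ⟨j, fun i hi => ?_, ?_⟩
      · exact (hxz i (hi.trans hjk)).symm.trans (hxyj i hi)
      · show z j < y j
        rwa [← hxz j hjk]
    exact fun i hi => hxyj i (hi.trans_le hkj)
  · exact fun i _ => congrFun (toLex_inj.mp hxy) i

end Pi

namespace AddMonoidHom

variable {ι : Type*}

theorem apply_ratCast (f : ℝ →+ (ι → ℝ)) (q : ℚ) (i : ι) : f q i = q * f 1 i := by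
  simpa using congrFun (map_ratCast_smul f ℝ ℝ q 1) i

variable [LinearOrder ι] {f : ℝ →+ (ι → ℝ)} {k : ι}

theorem apply_eq_zero_of_apply_one_eq_zero (hf : Monotone (toLex ∘ f))
    (h1 : ∀ i < k, f 1 i = 0) (t : ℝ) : ∀ i < k, f t i = 0 := by
  have hq : ∀ q : ℚ, ∀ i < k, f q i = 0 := fun q i hi => by
    rw [apply_ratCast, h1 i hi, mul_zero]
  obtain ⟨q₁, hq₁⟩ := exists_rat_lt t
  obtain ⟨q₂, hq₂⟩ := exists_rat_gt t
  have hsqueeze := Pi.apply_eq_of_toLex_le_of_le (hf hq₁.le) (hf hq₂.le)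
    (fun i hi => (hq q₁ i hi).trans (hq q₂ i hi).symm)
  exact fun i hi => (hsqueeze i hi).symm.trans (hq q₁ i hi)

theorem apply_pos_of_apply_one_pos (hf : Monotone (toLex ∘ f))
    (h1 : ∀ i < k, f 1 i = 0) (hk : 0 < f 1 k) {t : ℝ} (ht : 0 < t) : 0 < f t k := by
  obtain ⟨q, hq, hqt⟩ := exists_rat_btwn ht
  have hagree : ∀ i < k, f q i = f t i := fun i hi => by
    rw [apply_eq_zero_of_apply_one_eq_zero hf h1 q i hi,
      apply_eq_zero_of_apply_one_eq_zero hf h1 t i hi]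
  calc 0 < (q : ℝ) * f 1 k := mul_pos hq hk
    _ = f q k := (apply_ratCast f q k).symm
    _ ≤ f t k := Pi.apply_le_of_toLex (hf hqt.le) hagree

end AddMonoidHom

/-- Let `𝔬 : ℝ → ℝⁿ` be an order-preserving group homomorphism where `ℝⁿ` carries the
lexicographic order, let `a = 𝔬 1`, and let `k` be the first index where `a` is positive.
Then for every `t : ℝ`, the coordinates of `𝔬 t` before `k` vanish, and for `t > 0`
the `k`-th coordinate of `𝔬 t` is strictly positive. -/
theorem orderPreserving_real_to_lex_coords
    {n : ℕ} (𝔬 : ℝ →+ (Fin n → ℝ))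
    (h𝔬 : ∀ s t : ℝ, s < t → toLex (𝔬 s) < toLex (𝔬 t))
    (k : Fin n) (hk : 0 < 𝔬 1 k) (hkmin : ∀ i : Fin n, i < k → ¬ 0 < 𝔬 1 i) :
    (∀ t : ℝ, ∀ i : Fin n, i < k → 𝔬 t i = 0) ∧
      (∀ t : ℝ, 0 < t → 0 < 𝔬 t k) := by
  have hmono : Monotone (toLex ∘ 𝔬) := StrictMono.monotone fun s t hst => h𝔬 s t hst
  have h1 : ∀ i < k, 𝔬 1 i = 0 := by
    have h01 := Pi.apply_eq_of_toLex_le_of_forall_apply_le (hmono zero_le_one)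
      (fun i hi => by simpa using hkmin i hi)
    exact fun i hi => by simpa using (h01 i hi).symm
  exact ⟨AddMonoidHom.apply_eq_zero_of_apply_one_eq_zero hmono h1,
    fun _ ht => AddMonoidHom.apply_pos_of_apply_one_pos hmono h1 hk ht⟩
end

section
/- Let Λ be an ordered abelian group of finite rank n and Λ' a subgroup contained in the minimal nontrivial convex subgroup of Λ. Given any order-preserving embedding F : Λ → ℝⁿ (lexicographic order), there exists an order-preserving embedding f : Λ' → ℝ such that F(g) = (0,…,0,f(g)) for all g ∈ Λ', i.e. F restricted to Λ' factors through the inclusion iₙ : ℝ → ℝⁿ as the last coordinate. -/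
/-- An ordered abelian group has rank exactly `n`. -/
def HasRank (Λ : Type*) [AddCommGroup Λ] [LinearOrder Λ] [IsOrderedAddMonoid Λ] (n : ℕ) : Prop :=
  ∃ S : Finset Λ, S.card = n ∧ (∀ x ∈ S, x ≠ 0) ∧
    (∀ x : Λ, x ≠ 0 → ∃ y ∈ S, ArchEquiv x y) ∧
    (∀ x ∈ S, ∀ y ∈ S, ArchEquiv x y → x = y)

/-- A convex subgroup of an ordered abelian group. -/
def IsConvexSubgroup {Λ : Type*} [AddCommGroup Λ] [LinearOrder Λ] [IsOrderedAddMonoid Λ] (H : AddSubgroup Λ) : Prop :=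
  ∀ g ∈ H, ∀ k ∈ H, ∀ h : Λ, g < h → h < k → h ∈ H

/-! Two nonzero elements of `Λ` whose images under `F` have the same leading index (first
nonzero coordinate) are Archimedean equivalent, so the `n` Archimedean classes of `Λ` map
injectively, hence onto, `Fin n`. In particular some nonzero element has its image supported on
the last coordinate. The elements whose images vanish below the last coordinate form a convex
subgroup, which is therefore nontrivial and contains the minimal one; on it `F` is the last
coordinate, and that is an order embedding into `ℝ`. -/

open Function

-- `sInf ∅ = ⊤`, so the zero vector gets the junk value `⊤`.
noncomputable def leadingIndex {n : ℕ} [NeZero n] {M : Type*} [Zero M] (v : Fin n → M) :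
    Fin n :=
  sInf (support v)

section LeadingIndex

variable {n : ℕ} [NeZero n] {M : Type*}

theorem apply_leadingIndex_ne_zero [Zero M] {v : Fin n → M} (hv : v ≠ 0) :
    v (leadingIndex v) ≠ 0 :=
  csInf_mem (support_nonempty_iff.2 hv)

theorem apply_eq_zero_of_lt_leadingIndex [Zero M] {v : Fin n → M} {j : Fin n}
    (hj : j < leadingIndex v) : v j = 0 :=
  notMem_support.1 (notMem_of_lt_csInf' hj)

theorem leadingIndex_le_of_apply_ne_zero [Zero M] {v : Fin n → M} {j : Fin n} (hj : v j ≠ 0) :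
    leadingIndex v ≤ j :=
  csInf_le' hj

theorem leadingIndex_neg [SubtractionMonoid M] (v : Fin n → M) :
    leadingIndex (-v) = leadingIndex v :=
  congrArg sInf (support_neg v)

end LeadingIndex

def vanishingBelow {n : ℕ} {M : Type*} [AddGroup M] (i : Fin n) : AddSubgroup (Fin n → M) where
  carrier := {v | ∀ j < i, v j = 0}
  zero_mem' _ _ := rfl
  add_mem' hu hv j hj := by simp [hu j hj, hv j hj]
  neg_mem' hv j hj := by simp [hv j hj]

section VanishingBelow

variable {n : ℕ} [NeZero n] {M : Type*} [AddGroup M]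

theorem mem_vanishingBelow_of_toLex_le_of_le [LinearOrder M] {i : Fin n} {u v w : Fin n → M}
    (hu : u ∈ vanishingBelow i) (hw : w ∈ vanishingBelow i)
    (huv : toLex u ≤ toLex v) (hvw : toLex v ≤ toLex w) : v ∈ vanishingBelow i := by
  intro j hj
  by_contra hvj
  set l := leadingIndex v
  have hl : l < i := (leadingIndex_le_of_apply_ne_zero hvj).trans_lt hj
  have hv_below : ∀ k < l, v k = 0 := fun k hk => apply_eq_zero_of_lt_leadingIndex hk
  have hul : u l ≤ v l :=
    Pi.apply_le_of_toLex huv fun k hk => (hu k (hk.trans hl)).trans (hv_below k hk).symm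
  have hwl : v l ≤ w l :=
    Pi.apply_le_of_toLex hvw fun k hk => (hv_below k hk).trans (hw k (hk.trans hl)).symm
  rw [hu l hl] at hul
  rw [hw l hl] at hwl
  exact apply_leadingIndex_ne_zero (fun h => hvj (congrFun h j)) (le_antisymm hwl hul)

theorem eq_single_top_of_mem_vanishingBelow_top {v : Fin n → M}
    (hv : v ∈ vanishingBelow ⊤) : v = Pi.single ⊤ (v ⊤) := by
  funext j
  rcases eq_or_ne j ⊤ with rfl | hj
  · simp
  · simp [hj, hv j (lt_top_iff_ne_top.2 hj)]

theorem apply_top_lt_of_toLex_lt [LinearOrder M] {u v : Fin n → M}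
    (hu : u ∈ vanishingBelow ⊤) (hv : v ∈ vanishingBelow ⊤) (h : toLex u < toLex v) :
    u ⊤ < v ⊤ := by
  refine lt_of_le_of_ne (Pi.apply_le_of_toLex h.le fun j hj => (hu j hj).trans (hv j hj).symm)
    fun he => h.ne ?_
  rw [eq_single_top_of_mem_vanishingBelow_top hu, eq_single_top_of_mem_vanishingBelow_top hv, he]

end VanishingBelow

theorem HasRank.exists_ne_zero_apply_eq {Λ : Type*} [AddCommGroup Λ] [LinearOrder Λ]
    [IsOrderedAddMonoid Λ] {n : ℕ} (hrank : HasRank Λ n) (L : Λ → Fin n)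
    (hL : ∀ x y, x ≠ 0 → y ≠ 0 → L x = L y → ArchEquiv x y) (i : Fin n) :
    ∃ s, s ≠ 0 ∧ L s = i := by
  classical
  obtain ⟨S, hcard, hne, -, huniq⟩ := hrank
  have hinj : Set.InjOn L S := fun s hs t ht hst =>
    huniq s hs t ht (hL s t (hne s hs) (hne t ht) hst)
  have himage : S.image L = Finset.univ := Finset.eq_univ_of_card _ <| by
    rw [Finset.card_image_of_injOn hinj, hcard, Fintype.card_fin]
  obtain ⟨s, hs, rfl⟩ := Finset.mem_image.1 (himage ▸ Finset.mem_univ i)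
  exact ⟨s, hne s hs, rfl⟩

section OrderEmbedding

variable {Λ : Type*} [AddCommGroup Λ] [LinearOrder Λ] {n : ℕ} [NeZero n]
  {F : Λ →+ (Fin n → ℝ)}

theorem leadingIndex_map_abs (x : Λ) : leadingIndex (F |x|) = leadingIndex (F x) := by
  rcases abs_choice x with h | h <;> simp [h, leadingIndex_neg]

theorem apply_leadingIndex_map_pos (hF : StrictMono (toLex ∘ F)) {x : Λ} (hx : 0 < x) :
    0 < F x (leadingIndex (F x)) := by
  have hFx : F x ≠ 0 := (map_ne_zero_iff F hF.injective.of_comp).2 hx.ne'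
  have hle : F 0 (leadingIndex (F x)) ≤ F x (leadingIndex (F x)) :=
    Pi.apply_le_of_toLex (hF hx).le fun j hj => by
      rw [map_zero, apply_eq_zero_of_lt_leadingIndex hj, Pi.zero_apply]
  rw [map_zero, Pi.zero_apply] at hle
  exact hle.lt_of_ne' (apply_leadingIndex_ne_zero hFx)

theorem not_infinitelyLarger_of_leadingIndex_eq [IsOrderedAddMonoid Λ]
    (hF : StrictMono (toLex ∘ F)) {x y : Λ} (hx : x ≠ 0)
    (hxy : leadingIndex (F x) = leadingIndex (F y)) : ¬ InfinitelyLarger x y := by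
  intro hinf
  set i := leadingIndex (F x)
  have hxi : 0 < F |x| i := by
    simpa only [leadingIndex_map_abs] using apply_leadingIndex_map_pos hF (abs_pos.2 hx)
  have hbound (m : ℕ) : m * F |x| i ≤ F |y| i := by
    have hbelow (j : Fin n) (hj : j < i) : F (m • |x|) j = F |y| j := by
      have hxj : F |x| j = 0 := apply_eq_zero_of_lt_leadingIndex (by rwa [leadingIndex_map_abs])
      have hyj : F |y| j = 0 :=
        apply_eq_zero_of_lt_leadingIndex (by rwa [leadingIndex_map_abs, ← hxy])
      simp [hxj, hyj]
    simpa using Pi.apply_le_of_toLex (hF (hinf m)).le hbelow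
  obtain ⟨m, hm⟩ := exists_nat_gt (F |y| i / F |x| i)
  exact (hbound m).not_gt ((div_lt_iff₀ hxi).1 hm)

theorem archEquiv_of_leadingIndex_eq [IsOrderedAddMonoid Λ] (hF : StrictMono (toLex ∘ F))
    {x y : Λ} (hx : x ≠ 0) (hy : y ≠ 0) (hxy : leadingIndex (F x) = leadingIndex (F y)) :
    ArchEquiv x y :=
  ⟨not_infinitelyLarger_of_leadingIndex_eq hF hx hxy,
    not_infinitelyLarger_of_leadingIndex_eq hF hy hxy.symm⟩

theorem isConvexSubgroup_comap_vanishingBelow [IsOrderedAddMonoid Λ]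
    (hF : Monotone (toLex ∘ F)) (i : Fin n) :
    IsConvexSubgroup ((vanishingBelow i).comap F) := fun _ hg _ hk _ hgh hhk =>
  mem_vanishingBelow_of_toLex_le_of_le hg hk (hF hgh.le) (hF hhk.le)

theorem comap_vanishingBelow_top_ne_bot [IsOrderedAddMonoid Λ] (hF : StrictMono (toLex ∘ F))
    (hrank : HasRank Λ n) : (vanishingBelow ⊤).comap F ≠ ⊥ := by
  obtain ⟨s, hs, hLs⟩ := hrank.exists_ne_zero_apply_eq (fun x => leadingIndex (F x))
    (fun _ _ => archEquiv_of_leadingIndex_eq hF) ⊤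
  have hsmem : s ∈ (vanishingBelow ⊤).comap F := fun j hj =>
    apply_eq_zero_of_lt_leadingIndex (hLs ▸ hj)
  exact fun hbot => hs ((AddSubgroup.eq_bot_iff_forall _).1 hbot s hsmem)

end OrderEmbedding

theorem restriction_to_min_convex_factors_through_last_coord_general
    {Λ : Type*} [AddCommGroup Λ] [LinearOrder Λ] [IsOrderedAddMonoid Λ] {n : ℕ} (hn : 0 < n)
    (hrank : HasRank Λ n)
    (C : AddSubgroup Λ)
    (hCmin : ∀ D : AddSubgroup Λ, IsConvexSubgroup D → D ≠ ⊥ → C ≤ D)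
    (Λ' : AddSubgroup Λ) (hΛ' : Λ' ≤ C)
    (F : Λ →+ (Fin n → ℝ)) (hF : ∀ a b : Λ, a < b → toLex (F a) < toLex (F b)) :
    ∃ f : Λ' →+ ℝ, StrictMono f ∧
      ∀ g : Λ', F (g : Λ) = fun i : Fin n => if (i : ℕ) + 1 = n then f g else 0 := by
  have : NeZero n := ⟨hn.ne'⟩
  have hF' : StrictMono (toLex ∘ F) := hF
  have hmem (g : Λ') : F g ∈ vanishingBelow (⊤ : Fin n) :=
    hCmin _ (isConvexSubgroup_comap_vanishingBelow hF'.monotone ⊤)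
      (comap_vanishingBelow_top_ne_bot hF' hrank) (hΛ' g.2)
  refine ⟨(Pi.evalAddMonoidHom _ ⊤).comp (F.comp Λ'.subtype),
    fun g h hgh => apply_top_lt_of_toLex_lt (hmem g) (hmem h) (hF _ _ hgh), fun g => ?_⟩
  have hlast (i : Fin n) : (i : ℕ) + 1 = n ↔ i = ⊤ := by
    rw [Fin.ext_iff, Fin.val_top]
    omega
  refine (eq_single_top_of_mem_vanishingBelow_top (hmem g)).trans (funext fun i => ?_)
  simp only [Pi.single_apply, hlast]
  rfl

/-- Let `Λ` be an ordered abelian group of finite rank `n` and `Λ'` a subgroup contained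
in the minimal nontrivial convex subgroup `C` of `Λ`.  Given any order-preserving
embedding `F : Λ → ℝⁿ` (lexicographic order), there is an order-preserving embedding
`f : Λ' → ℝ` such that `F g = (0, …, 0, f g)` for all `g ∈ Λ'`. -/
theorem restriction_to_min_convex_factors_through_last_coord
    {Λ : Type*} [AddCommGroup Λ] [LinearOrder Λ] [IsOrderedAddMonoid Λ] {n : ℕ} (hn : 0 < n)
    (hrank : HasRank Λ n)
    (C : AddSubgroup Λ) (hCconv : IsConvexSubgroup C) (hCnontriv : C ≠ ⊥)
    (hCmin : ∀ D : AddSubgroup Λ, IsConvexSubgroup D → D ≠ ⊥ → C ≤ D)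
    (Λ' : AddSubgroup Λ) (hΛ' : Λ' ≤ C)
    (F : Λ →+ (Fin n → ℝ)) (hF : ∀ a b : Λ, a < b → toLex (F a) < toLex (F b)) :
    ∃ f : Λ' →+ ℝ, StrictMono f ∧
      ∀ g : Λ', F (g : Λ) = fun i : Fin n => if (i : ℕ) + 1 = n then f g else 0 :=
  restriction_to_min_convex_factors_through_last_coord_general hn hrank C hCmin Λ' hΛ' F hF
end

section
/- Let a group G act by isometries on a Λ-tree T with translation length function ℓ, and let Λ' ⊂ Λ be a convex subgroup with ℓ(G) ⊆ Λ'. Then the quotient T₀ = T/~, where x ~ y iff d(x,y) ∈ Λ', is a (Λ/Λ')-tree, and the induced action of G on T₀ has identically zero translation length function. -/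
/-- A `Λ`-metric on `T`. -/
def IsLambdaMetric {Λ T : Type*} [AddCommGroup Λ] [LinearOrder Λ] [IsOrderedAddMonoid Λ] (d : T → T → Λ) : Prop :=
  (∀ x y : T, 0 ≤ d x y) ∧ (∀ x y : T, d x y = 0 ↔ x = y) ∧
    (∀ x y : T, d x y = d y x) ∧ ∀ x y z : T, d x z ≤ d x y + d y z

/-- `s` is a geodesic segment from `x` to `y` for the `Λ`-metric `d`:
an isometric image of the interval `[0, d x y] ⊆ Λ`. -/
def IsSegmentBetween {Λ T : Type*} [AddCommGroup Λ] [LinearOrder Λ] [IsOrderedAddMonoid Λ]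
    (d : T → T → Λ) (x y : T) (s : Set T) : Prop :=
  ∃ f : Λ → T, f 0 = x ∧ f (d x y) = y ∧ s = f '' Set.Icc 0 (d x y) ∧
    ∀ u ∈ Set.Icc (0 : Λ) (d x y), ∀ v ∈ Set.Icc (0 : Λ) (d x y),
      d (f u) (f v) = |u - v|

/-- `(T, d)` is a `Λ`-tree: a geodesic `Λ`-metric space in which two segments
meeting only at a common endpoint concatenate to a segment, and the intersection
of two segments with a common endpoint is a segment. -/
def IsLambdaTree {Λ T : Type*} [AddCommGroup Λ] [LinearOrder Λ] [IsOrderedAddMonoid Λ] (d : T → T → Λ) : Prop :=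
  IsLambdaMetric d ∧
  (∀ x y : T, ∃ s : Set T, IsSegmentBetween d x y s) ∧
  (∀ (x y z : T) (s₁ s₂ : Set T), IsSegmentBetween d x y s₁ → IsSegmentBetween d y z s₂ →
    s₁ ∩ s₂ = {y} → IsSegmentBetween d x z (s₁ ∪ s₂)) ∧
  (∀ (x y z : T) (s₁ s₂ : Set T), IsSegmentBetween d x y s₁ → IsSegmentBetween d x z s₂ →
    ∃ (w : T) (s : Set T), IsSegmentBetween d x w s ∧ s₁ ∩ s₂ = s)

/-!
Since `π` is monotone, `π ∘ d` is a pseudometric whose null pairs are exactly the pairs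
identified in `T₀`. A geodesic `Λ`-metric space is a `Λ`-tree as soon as every triple has a
median and a point between `x` and `y` is determined by its distance from `x`. Geodesics and
medians pass from `T` to `T₀` through `π` (segments are reparametrized by a section of `π` over
`[0, π (d x y)]`). For uniqueness, a point `p` that is between `x` and `y` modulo `ker π` is
replaced, via the median of `x, p, y`, by a point `m` of the segment `[x, y]` with
`π (d p m) = 0`; on that segment distances are differences of distances from `x`. Finally, a point
realizing the translation length of `g` is moved by `π (ℓ g) = 0`.
-/

open Set Function

section Segment

variable {Λ T : Type*} [AddCommGroup Λ] [LinearOrder Λ] [IsOrderedAddMonoid Λ] {d : T → T → Λ}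
  {x y p q : T} {s : Set T}

lemma dist_apply_of_isometricOn_Icc (hmet : IsLambdaMetric d) {f : Λ → T} (hf0 : f 0 = x)
    (hfD : f (d x y) = y)
    (hiso : ∀ u ∈ Icc (0 : Λ) (d x y), ∀ v ∈ Icc (0 : Λ) (d x y), d (f u) (f v) = |u - v|)
    {u : Λ} (hu : u ∈ Icc 0 (d x y)) : d x (f u) = u ∧ d (f u) y = d x y - u := by
  have hD : d x y ∈ Icc 0 (d x y) := ⟨hmet.1 x y, le_rfl⟩
  constructor
  · rw [← hf0, hiso 0 (left_mem_Icc.2 hD.1) u hu, zero_sub, abs_neg, abs_of_nonneg hu.1]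
  · rw [← hfD, hiso u hu _ hD, abs_of_nonpos (sub_nonpos.2 hu.2), neg_sub, hfD]

namespace IsSegmentBetween

lemma add_dist_eq (hmet : IsLambdaMetric d) (h : IsSegmentBetween d x y s) (hp : p ∈ s) :
    d x p + d p y = d x y := by
  obtain ⟨f, hf0, hfD, rfl, hiso⟩ := h
  obtain ⟨u, hu, rfl⟩ := hp
  obtain ⟨h₁, h₂⟩ := dist_apply_of_isometricOn_Icc hmet hf0 hfD hiso hu
  rw [h₁, h₂, add_sub_cancel]

lemma exists_dist_eq (hmet : IsLambdaMetric d) (h : IsSegmentBetween d x y s) {t : Λ}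
    (ht : t ∈ Icc 0 (d x y)) : ∃ p ∈ s, d x p = t := by
  obtain ⟨f, hf0, hfD, rfl, hiso⟩ := h
  exact ⟨f t, mem_image_of_mem f ht, (dist_apply_of_isometricOn_Icc hmet hf0 hfD hiso ht).1⟩

lemma eq_of_dist_eq (hmet : IsLambdaMetric d) (h : IsSegmentBetween d x y s) (hp : p ∈ s)
    (hq : q ∈ s) (hpq : d x p = d x q) : p = q := by
  obtain ⟨f, hf0, hfD, rfl, hiso⟩ := h
  obtain ⟨u, hu, rfl⟩ := hp
  obtain ⟨v, hv, rfl⟩ := hq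
  rw [(dist_apply_of_isometricOn_Icc hmet hf0 hfD hiso hu).1,
    (dist_apply_of_isometricOn_Icc hmet hf0 hfD hiso hv).1] at hpq
  rw [hpq]

lemma left_mem (hmet : IsLambdaMetric d) (h : IsSegmentBetween d x y s) : x ∈ s := by
  obtain ⟨p, hp, hxp⟩ := h.exists_dist_eq hmet (left_mem_Icc.2 (hmet.1 x y))
  rwa [(hmet.2.1 x p).1 hxp]

lemma right_mem (hmet : IsLambdaMetric d) (h : IsSegmentBetween d x y s) : y ∈ s := by
  obtain ⟨p, hp, hxp⟩ := h.exists_dist_eq hmet (right_mem_Icc.2 (hmet.1 x y))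
  have hpy : d p y = 0 := by
    have := h.add_dist_eq hmet hp
    rwa [hxp, add_eq_left] at this
  rwa [(hmet.2.1 p y).1 hpy] at hp

lemma dist_le (hmet : IsLambdaMetric d) (h : IsSegmentBetween d x y s) (hp : p ∈ s) :
    d x p ≤ d x y :=
  h.add_dist_eq hmet hp ▸ le_add_of_nonneg_right (hmet.1 p y)

lemma symm (hmet : IsLambdaMetric d) (h : IsSegmentBetween d x y s) :
    IsSegmentBetween d y x s := by
  obtain ⟨f, hf0, hfD, rfl, hiso⟩ := h
  have hflip : ∀ u ∈ Icc 0 (d x y), d x y - u ∈ Icc 0 (d x y) := fun u hu =>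
    ⟨sub_nonneg.2 hu.2, sub_le_self _ hu.1⟩
  unfold IsSegmentBetween
  rw [hmet.2.2.1 y x]
  refine ⟨fun u => f (d x y - u), by simpa using hfD, by simpa using hf0, ?_, fun u hu v hv => ?_⟩
  · ext p
    constructor
    · rintro ⟨u, hu, rfl⟩
      exact ⟨d x y - u, hflip u hu, by simp⟩
    · rintro ⟨u, hu, rfl⟩
      exact ⟨d x y - u, hflip u hu, rfl⟩
  · rw [hiso _ (hflip u hu) _ (hflip v hv), sub_sub_sub_cancel_left, abs_sub_comm]

lemma restrict (hmet : IsLambdaMetric d) (h : IsSegmentBetween d x y s) (hp : p ∈ s) :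
    IsSegmentBetween d x p {q ∈ s | d x q ≤ d x p} := by
  obtain ⟨f, hf0, hfD, rfl, hiso⟩ := h
  obtain ⟨u, hu, rfl⟩ := hp
  have hdist := fun {v} (hv : v ∈ Icc 0 (d x y)) =>
    (dist_apply_of_isometricOn_Icc hmet hf0 hfD hiso hv).1
  have hsub : Icc 0 (d x (f u)) ⊆ Icc 0 (d x y) := Icc_subset_Icc_right ((hdist hu).le.trans hu.2)
  refine ⟨f, hf0, by rw [hdist hu], ?_, fun v hv w hw => hiso v (hsub hv) w (hsub hw)⟩
  ext q
  constructor
  · rintro ⟨⟨v, hv, rfl⟩, hvu⟩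
    exact ⟨v, ⟨hv.1, hdist hv ▸ hvu⟩, rfl⟩
  · rintro ⟨v, hv, rfl⟩
    exact ⟨mem_image_of_mem f (hsub hv), (hdist (hsub hv)).le.trans hv.2⟩

end IsSegmentBetween

end Segment

section Between

variable {Λ T : Type*} [AddCommGroup Λ] [LinearOrder Λ] [IsOrderedAddMonoid Λ]

def HasMedians (d : T → T → Λ) : Prop :=
  ∀ x y z : T, ∃ w, d x w + d w y = d x y ∧ d x w + d w z = d x z ∧ d y w + d w z = d y z

def HasUniqueBetweenPoints (d : T → T → Λ) : Prop :=
  ∀ x y p q : T, d x p + d p y = d x y → d x q + d q y = d x y → d x p = d x q → p = q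

variable {d : T → T → Λ} {x y z p q w : T} {s s₁ s₂ : Set T}

namespace IsLambdaMetric

lemma between_comm (hmet : IsLambdaMetric d) (hp : d x p + d p y = d x y) :
    d y p + d p x = d y x := by
  rwa [hmet.2.2.1 y p, hmet.2.2.1 p x, hmet.2.2.1 y x, add_comm]

lemma between_trans (hmet : IsLambdaMetric d) (hp : d x p + d p w = d x w)
    (hw : d x w + d w y = d x y) : d x p + d p y = d x y := by
  refine le_antisymm ?_ (hmet.2.2.2 x p y)
  calc d x p + d p y ≤ d x p + (d p w + d w y) := by gcongr; exact hmet.2.2.2 p w y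
    _ = d x y := by rw [← add_assoc, hp, hw]

lemma dist_eq_abs_sub_of_between (hmet : IsLambdaMetric d)
    (hgeo : ∀ x y : T, ∃ s, IsSegmentBetween d x y s) (huniq : HasUniqueBetweenPoints d)
    (hp : d x p + d p y = d x y) (hq : d x q + d q y = d x y) : d p q = |d x p - d x q| := by
  obtain ⟨s, f, hf0, hfD, -, hiso⟩ := hgeo x y
  have hIcc : ∀ {r}, d x r + d r y = d x y → d x r ∈ Icc 0 (d x y) := fun hr =>
    ⟨hmet.1 _ _, hr ▸ le_add_of_nonneg_right (hmet.1 _ _)⟩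
  have hf : ∀ {r}, d x r + d r y = d x y → f (d x r) = r := fun hr => by
    have h := dist_apply_of_isometricOn_Icc hmet hf0 hfD hiso (hIcc hr)
    exact huniq x y _ _ (by rw [h.1, h.2, add_sub_cancel]) hr h.1
  rw [← hiso _ (hIcc hp) _ (hIcc hq), hf hp, hf hq]

lemma between_of_dist_le (hmet : IsLambdaMetric d)
    (hgeo : ∀ x y : T, ∃ s, IsSegmentBetween d x y s) (huniq : HasUniqueBetweenPoints d)
    (hy : d x y + d y z = d x z) (hp : d x p + d p z = d x z) (hle : d x p ≤ d x y) :
    d x p + d p y = d x y := by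
  rw [hmet.dist_eq_abs_sub_of_between hgeo huniq hp hy, abs_of_nonpos (sub_nonpos.2 hle),
    neg_sub, add_sub_cancel]

lemma segment_eq_setOf_between (hmet : IsLambdaMetric d) (huniq : HasUniqueBetweenPoints d)
    (h : IsSegmentBetween d x y s) : s = {p | d x p + d p y = d x y} := by
  refine subset_antisymm (fun p hp => h.add_dist_eq hmet hp) fun p hp => ?_
  obtain ⟨q, hq, hqp⟩ := h.exists_dist_eq hmet
    ⟨hmet.1 x p, hp ▸ le_add_of_nonneg_right (hmet.1 p y)⟩
  rwa [huniq x y q p (h.add_dist_eq hmet hq) hp hqp] at hq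

end IsLambdaMetric

namespace IsLambdaTree

lemma hasMedians (hT : IsLambdaTree d) : HasMedians d := by
  intro x y z
  have hmet := hT.1
  obtain ⟨s₁, h₁⟩ := hT.2.1 x y
  obtain ⟨s₂, h₂⟩ := hT.2.1 x z
  obtain ⟨w, σ, hσ, hcap⟩ := hT.2.2.2 x y z s₁ s₂ h₁ h₂
  have hw : w ∈ s₁ ∩ s₂ := hcap ▸ hσ.right_mem hmet
  have hA := (h₁.symm hmet).restrict hmet hw.1
  have hB := ((h₂.symm hmet).restrict hmet hw.2).symm hmet
  -- the subsegments `[y, w] ⊆ s₁` and `[w, z] ⊆ s₂` meet only at `w`, so they concatenate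
  have hAB : {q ∈ s₁ | d y q ≤ d y w} ∩ {q ∈ s₂ | d z q ≤ d z w} = {w} := by
    refine subset_antisymm (fun q ⟨⟨hq₁, hqy⟩, hq₂, _⟩ => ?_)
      (singleton_subset_iff.2 ⟨⟨hw.1, le_rfl⟩, hw.2, le_rfl⟩)
    refine h₁.eq_of_dist_eq hmet hq₁ hw.1
      (le_antisymm (hσ.dist_le hmet (hcap ▸ ⟨hq₁, hq₂⟩)) ?_)
    rw [hmet.2.2.1 y q, hmet.2.2.1 y w] at hqy
    refine le_of_add_le_add_right (a := d q y) ?_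
    calc d x w + d q y ≤ d x w + d w y := by gcongr
      _ = d x q + d q y := by rw [h₁.add_dist_eq hmet hq₁, h₁.add_dist_eq hmet hw.1]
  exact ⟨w, h₁.add_dist_eq hmet hw.1, h₂.add_dist_eq hmet hw.2,
    (hT.2.2.1 y w z _ _ hA hB hAB).add_dist_eq hmet (Or.inl (hA.right_mem hmet))⟩

lemma segment_unique (hT : IsLambdaTree d) (h₁ : IsSegmentBetween d x y s₁)
    (h₂ : IsSegmentBetween d x y s₂) : s₁ = s₂ := by
  have hmet := hT.1
  obtain ⟨w, σ, hσ, hcap⟩ := hT.2.2.2 x y y s₁ s₂ h₁ h₂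
  have hyσ : y ∈ σ := hcap ▸ ⟨h₁.right_mem hmet, h₂.right_mem hmet⟩
  have key : ∀ s, IsSegmentBetween d x y s → σ ⊆ s → s = σ := fun s h hσs =>
    subset_antisymm (fun q hq => by
      obtain ⟨r, hr, hrq⟩ := hσ.exists_dist_eq hmet
        ⟨hmet.1 x q, (h.dist_le hmet hq).trans (hσ.dist_le hmet hyσ)⟩
      rwa [← h.eq_of_dist_eq hmet (hσs hr) hq hrq]) hσs
  rw [key s₁ h₁ (hcap ▸ inter_subset_left), key s₂ h₂ (hcap ▸ inter_subset_right)]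

lemma exists_segment_mem_of_between (hT : IsLambdaTree d) (hp : d x p + d p y = d x y) :
    ∃ s, IsSegmentBetween d x y s ∧ p ∈ s := by
  have hmet := hT.1
  obtain ⟨s₁, h₁⟩ := hT.2.1 x p
  obtain ⟨s₂, h₂⟩ := hT.2.1 p y
  have hcap : s₁ ∩ s₂ = {p} := by
    refine subset_antisymm (fun q ⟨hq₁, hq₂⟩ => ?_)
      (singleton_subset_iff.2 ⟨h₁.right_mem hmet, h₂.left_mem hmet⟩)
    have hle : d x q + d q y + (d q p + d q p) ≤ d x q + d q y + 0 := calc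
      _ = d x y := by
        rw [← hp, ← h₁.add_dist_eq hmet hq₁, ← h₂.add_dist_eq hmet hq₂, hmet.2.2.1 p q]; abel
      _ ≤ _ := by rw [add_zero]; exact hmet.2.2.2 x q y
    have h0 := le_antisymm ((add_le_add_iff_left _).1 hle) (add_nonneg (hmet.1 q p) (hmet.1 q p))
    exact (hmet.2.1 q p).1 ((add_eq_zero_iff_of_nonneg (hmet.1 q p) (hmet.1 q p)).1 h0).1
  exact ⟨s₁ ∪ s₂, hT.2.2.1 x p y s₁ s₂ h₁ h₂ hcap, Or.inl (h₁.right_mem hmet)⟩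

lemma hasUniqueBetweenPoints (hT : IsLambdaTree d) : HasUniqueBetweenPoints d := by
  intro x y p q hp hq hpq
  obtain ⟨s, hs, hps⟩ := hT.exists_segment_mem_of_between hp
  obtain ⟨s', hs', hqs'⟩ := hT.exists_segment_mem_of_between hq
  rw [← hT.segment_unique hs hs'] at hqs'
  exact hs.eq_of_dist_eq hT.1 hps hqs' hpq

end IsLambdaTree

end Between

section Converse

variable {Λ T : Type*} [AddCommGroup Λ] [LinearOrder Λ] [IsOrderedAddMonoid Λ] {d : T → T → Λ}
  {x y z : T} {s₁ s₂ : Set T}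

namespace IsLambdaMetric

lemma isSegmentBetween_union (hmet : IsLambdaMetric d)
    (hgeo : ∀ x y : T, ∃ s, IsSegmentBetween d x y s) (hmed : HasMedians d)
    (huniq : HasUniqueBetweenPoints d) (h₁ : IsSegmentBetween d x y s₁)
    (h₂ : IsSegmentBetween d y z s₂) (hcap : s₁ ∩ s₂ = {y}) :
    IsSegmentBetween d x z (s₁ ∪ s₂) := by
  obtain ⟨s, hs⟩ := hgeo x z
  rw [hmet.segment_eq_setOf_between huniq h₁, hmet.segment_eq_setOf_between huniq h₂] at hcap ⊢
  obtain ⟨w, hw₁, hw₂, hw₃⟩ := hmed x y z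
  have hy : d x y + d y z = d x z := (hcap.subset ⟨hw₁, hw₃⟩ : w = y) ▸ hw₂
  convert hs using 1
  rw [hmet.segment_eq_setOf_between huniq hs]
  ext p
  simp only [mem_union, mem_ofPred_eq]
  refine ⟨fun hp => hp.elim (fun h => hmet.between_trans h hy) fun h =>
    hmet.between_comm (hmet.between_trans (hmet.between_comm h) (hmet.between_comm hy)),
    fun hp => ?_⟩
  rcases le_total (d x p) (d x y) with hle | hle
  · exact Or.inl (hmet.between_of_dist_le hgeo huniq hy hp hle)
  · right
    rw [hmet.dist_eq_abs_sub_of_between hgeo huniq hy hp, abs_of_nonpos (sub_nonpos.2 hle),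
      eq_sub_of_add_eq' hp, eq_sub_of_add_eq' hy]
    abel

lemma exists_isSegmentBetween_inter (hmet : IsLambdaMetric d)
    (hgeo : ∀ x y : T, ∃ s, IsSegmentBetween d x y s) (hmed : HasMedians d)
    (huniq : HasUniqueBetweenPoints d) (h₁ : IsSegmentBetween d x y s₁)
    (h₂ : IsSegmentBetween d x z s₂) : ∃ w s, IsSegmentBetween d x w s ∧ s₁ ∩ s₂ = s := by
  obtain ⟨w, hw₁, hw₂, hw₃⟩ := hmed x y z
  obtain ⟨s, hs⟩ := hgeo x w
  refine ⟨w, s, hs, ?_⟩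
  rw [hmet.segment_eq_setOf_between huniq h₁, hmet.segment_eq_setOf_between huniq h₂,
    hmet.segment_eq_setOf_between huniq hs]
  ext p
  simp only [mem_inter_iff, mem_ofPred_eq]
  refine ⟨fun ⟨hpy, hpz⟩ => hmet.between_of_dist_le hgeo huniq hw₁ hpy ?_,
    fun hpw => ⟨hmet.between_trans hpw hw₁, hmet.between_trans hpw hw₂⟩⟩
  have key : d y w + d w z ≤ d y p + d p z := hw₃ ▸ hmet.2.2.2 y p z
  rw [hmet.2.2.1 y w, hmet.2.2.1 y p, eq_sub_of_add_eq' hw₁, eq_sub_of_add_eq' hw₂,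
    eq_sub_of_add_eq' hpy, eq_sub_of_add_eq' hpz, ← sub_nonneg] at key
  rw [← nsmul_le_nsmul_iff_right two_ne_zero, ← sub_nonneg]
  convert key using 1
  rw [two_nsmul, two_nsmul]
  abel

theorem isLambdaTree (hmet : IsLambdaMetric d)
    (hgeo : ∀ x y : T, ∃ s, IsSegmentBetween d x y s) (hmed : HasMedians d)
    (huniq : HasUniqueBetweenPoints d) : IsLambdaTree d :=
  ⟨hmet, hgeo, fun _ _ _ _ _ h₁ h₂ hcap => hmet.isSegmentBetween_union hgeo hmed huniq h₁ h₂ hcap,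
    fun _ _ _ _ _ h₁ h₂ => hmet.exists_isSegmentBetween_inter hgeo hmed huniq h₁ h₂⟩

end IsLambdaMetric

end Converse

section Quotient

variable {Λ M T T₀ : Type*} [AddCommGroup Λ] [AddCommGroup M] {d : T → T → Λ} {π : Λ →+ M}
  {mk : T → T₀} {d₀ : T₀ → T₀ → M}

lemma HasMedians.of_surjective (hmed : HasMedians d) (hmk : Surjective mk)
    (hd₀ : ∀ x y, d₀ (mk x) (mk y) = π (d x y)) : HasMedians d₀ := by
  refine hmk.forall₃.2 fun x y z => ?_
  obtain ⟨w, h₁, h₂, h₃⟩ := hmed x y z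
  refine ⟨mk w, ?_, ?_, ?_⟩ <;> rw [hd₀, hd₀, hd₀, ← map_add] <;> congr 1

variable [LinearOrder Λ] [LinearOrder M]

lemma AddMonoidHom.map_abs_of_monotone (hπ : Monotone π) (a : Λ) : π |a| = |π a| := by
  rw [abs_eq_max_neg, hπ.map_max, map_neg, ← abs_eq_max_neg]

lemma exists_section_Icc_of_monotone (hπ : Monotone π) (hπ_surj : Surjective π) {D : Λ}
    (hD : 0 ≤ D) : ∃ c : M → Λ, ∀ m ∈ Icc 0 (π D), c m ∈ Icc 0 D ∧ π (c m) = m := by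
  choose c hc using hπ_surj
  refine ⟨fun m => max 0 (min (c m) D), fun m hm =>
    ⟨⟨le_max_left _ _, max_le hD (min_le_right _ _)⟩, ?_⟩⟩
  rw [hπ.map_max, hπ.map_min, map_zero, hc, min_eq_left hm.2, max_eq_right hm.1]

variable [IsOrderedAddMonoid Λ]

lemma IsLambdaMetric.map_dist_congr_right (hmet : IsLambdaMetric d) (hπ : Monotone π) {x y y' : T}
    (h : π (d y y') = 0) : π (d x y) = π (d x y') :=
  le_antisymm (by simpa [hmet.2.2.1 y' y, h] using hπ (hmet.2.2.2 x y' y))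
    (by simpa [h] using hπ (hmet.2.2.2 x y y'))

variable [IsOrderedAddMonoid M]

namespace IsLambdaMetric

lemma of_surjective (hmet : IsLambdaMetric d) (hπ : Monotone π) (hmk : Surjective mk)
    (hd₀ : ∀ x y, d₀ (mk x) (mk y) = π (d x y)) (hmk_eq : ∀ x y, mk x = mk y ↔ π (d x y) = 0) :
    IsLambdaMetric d₀ := by
  refine ⟨hmk.forall₂.2 fun x y => ?_, hmk.forall₂.2 fun x y => ?_,
    hmk.forall₂.2 fun x y => ?_, hmk.forall₃.2 fun x y z => ?_⟩
  · rw [hd₀, ← map_zero π]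
    exact hπ (hmet.1 x y)
  · rw [hd₀, hmk_eq]
  · rw [hd₀, hd₀, hmet.2.2.1]
  · rw [hd₀, hd₀, hd₀, ← map_add]
    exact hπ (hmet.2.2.2 x y z)

lemma exists_isSegmentBetween_of_surjective (hmet : IsLambdaMetric d)
    (hgeo : ∀ x y : T, ∃ s, IsSegmentBetween d x y s) (hπ : Monotone π)
    (hπ_surj : Surjective π) (hmk : Surjective mk) (hd₀ : ∀ x y, d₀ (mk x) (mk y) = π (d x y))
    (hmk_eq : ∀ x y, mk x = mk y ↔ π (d x y) = 0) :
    ∀ X Y : T₀, ∃ s, IsSegmentBetween d₀ X Y s := by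
  refine hmk.forall₂.2 fun x y => ?_
  obtain ⟨s, f, hf0, hfD, -, hiso⟩ := hgeo x y
  obtain ⟨c, hc⟩ := exists_section_Icc_of_monotone hπ hπ_surj (hmet.1 x y)
  have hdist := fun {m} (hm : m ∈ Icc 0 (π (d x y))) =>
    dist_apply_of_isometricOn_Icc hmet hf0 hfD hiso (hc m hm).1
  have h0 : (0 : M) ∈ Icc 0 (π (d x y)) := left_mem_Icc.2 (map_zero π ▸ hπ (hmet.1 x y))
  have hD : π (d x y) ∈ Icc 0 (π (d x y)) := right_mem_Icc.2 h0.2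
  refine ⟨_, fun m => mk (f (c m)), ?_, ?_, rfl, fun u hu v hv => ?_⟩
  · rw [hmk_eq, hmet.2.2.1, (hdist h0).1, (hc 0 h0).2]
  · rw [hd₀, hmk_eq, (hdist hD).2, map_sub, (hc _ hD).2, sub_self]
  · rw [hd₀] at hu hv
    rw [hd₀, hiso _ (hc u hu).1 _ (hc v hv).1, π.map_abs_of_monotone hπ, map_sub, (hc u hu).2,
      (hc v hv).2]

end IsLambdaMetric

namespace IsLambdaTree

lemma exists_between_map_dist_eq_zero (hT : IsLambdaTree d) (hπ : Monotone π) {x y r : T}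
    (hr : π (d x r) + π (d r y) = π (d x y)) :
    ∃ m, d x m + d m y = d x y ∧ π (d r m) = 0 := by
  obtain ⟨m, h₁, h₂, h₃⟩ := hT.hasMedians x r y
  refine ⟨m, h₂, ?_⟩
  have h : π (d r m) + π (d r m) = 0 := by
    rw [← map_add, show d r m + d r m = d x r + d r y - d x y by
      rw [← h₁, ← h₂, ← h₃, hT.1.2.2.1 m r]; abel, map_sub, map_add, hr, sub_self]
  have h0 : 0 ≤ π (d r m) := map_zero π ▸ hπ (hT.1.1 r m)
  exact ((add_eq_zero_iff_of_nonneg h0 h0).1 h).1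

lemma hasUniqueBetweenPoints_of_surjective (hT : IsLambdaTree d) (hπ : Monotone π)
    (hmk : Surjective mk) (hd₀ : ∀ x y, d₀ (mk x) (mk y) = π (d x y))
    (hmk_eq : ∀ x y, mk x = mk y ↔ π (d x y) = 0) : HasUniqueBetweenPoints d₀ := by
  refine hmk.forall₂.2 fun x y => hmk.forall₂.2 fun p q hp hq hpq => ?_
  rw [hd₀, hd₀, hd₀] at hp hq
  rw [hd₀, hd₀] at hpq
  obtain ⟨m, hm, hpm⟩ := hT.exists_between_map_dist_eq_zero hπ hp
  obtain ⟨m', hm', hqm'⟩ := hT.exists_between_map_dist_eq_zero hπ hq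
  rw [(hmk_eq p m).2 hpm, (hmk_eq q m').2 hqm', hmk_eq,
    hT.1.dist_eq_abs_sub_of_between hT.2.1 hT.hasUniqueBetweenPoints hm hm',
    π.map_abs_of_monotone hπ, map_sub, ← hT.1.map_dist_congr_right hπ hpm,
    ← hT.1.map_dist_congr_right hπ hqm', hpq, sub_self, abs_zero]

theorem of_surjective (hT : IsLambdaTree d) (hπ : Monotone π) (hπ_surj : Surjective π)
    (hmk : Surjective mk) (hd₀ : ∀ x y, d₀ (mk x) (mk y) = π (d x y))
    (hmk_eq : ∀ x y, mk x = mk y ↔ π (d x y) = 0) : IsLambdaTree d₀ :=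
  (hT.1.of_surjective hπ hmk hd₀ hmk_eq).isLambdaTree
    (hT.1.exists_isSegmentBetween_of_surjective hT.2.1 hπ hπ_surj hmk hd₀ hmk_eq)
    (hT.hasMedians.of_surjective hmk hd₀) (hT.hasUniqueBetweenPoints_of_surjective hπ hmk hd₀ hmk_eq)

end IsLambdaTree

end Quotient

theorem quotient_tree_of_convex_subgroup_general
    {Λ T M G : Type*} [AddCommGroup Λ] [LinearOrder Λ] [IsOrderedAddMonoid Λ] [AddCommGroup M] [LinearOrder M] [IsOrderedAddMonoid M] [Group G]
    (d : T → T → Λ) (hT : IsLambdaTree d)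
    (act : G → T → T)
    (hact_iso : ∀ (g : G) (x y : T), d (act g x) (act g y) = d x y)
    (ℓ : G → Λ)
    (hℓ : ∀ g : G, (∀ x : T, ℓ g ≤ d x (act g x)) ∧ ∃ x : T, d x (act g x) = ℓ g)
    (Λ' : AddSubgroup Λ)
    (hℓΛ' : ∀ g : G, ℓ g ∈ Λ')
    (π : Λ →+ M) (hπ_mono : Monotone π) (hπ_surj : Function.Surjective π)
    (hπ_ker : ∀ x : Λ, π x = 0 ↔ x ∈ Λ') :
    ∃ d₀ : Quot (fun x y : T => d x y ∈ Λ') → Quot (fun x y : T => d x y ∈ Λ') → M,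
      (∀ x y : T, d₀ (Quot.mk _ x) (Quot.mk _ y) = π (d x y)) ∧
      IsLambdaTree d₀ ∧
      ∃ act₀ : G → Quot (fun x y : T => d x y ∈ Λ') → Quot (fun x y : T => d x y ∈ Λ'),
        (∀ (g : G) (x : T), act₀ g (Quot.mk _ x) = Quot.mk _ (act g x)) ∧
        (∀ (g : G) (q q' : Quot (fun x y : T => d x y ∈ Λ')),
          d₀ (act₀ g q) (act₀ g q') = d₀ q q') ∧
        ∀ g : G, ∃ q : Quot (fun x y : T => d x y ∈ Λ'), d₀ q (act₀ g q) = 0 := by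
  have hker : ∀ {x y : T}, d x y ∈ Λ' → π (d x y) = 0 := fun h => (hπ_ker _).2 h
  let d₀ := Quot.lift₂ (fun x y => π (d x y))
    (fun _ _ _ h => hT.1.map_dist_congr_right hπ_mono (hker h))
    (fun _ _ z h => by
      simp only [hT.1.2.2.1 _ z]
      exact hT.1.map_dist_congr_right hπ_mono (hker h))
  have hd₀ : ∀ x y : T, d₀ (Quot.mk _ x) (Quot.mk _ y) = π (d x y) := fun _ _ => rfl
  have hmk_eq : ∀ x y : T, Quot.mk (fun x y : T => d x y ∈ Λ') x = Quot.mk _ y ↔ π (d x y) = 0 :=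
    fun x y => ⟨fun h => by rw [← hd₀, h, hd₀, (hT.1.2.1 y y).2 rfl, map_zero],
      fun h => Quot.sound ((hπ_ker _).1 h)⟩
  refine ⟨d₀, hd₀, hT.of_surjective hπ_mono hπ_surj Quot.mk_surjective hd₀ hmk_eq,
    fun g => Quot.map (act g) fun x y h => (hact_iso g x y).symm ▸ h, fun _ _ => rfl,
    fun g => Quot.mk_surjective.forall₂.2 fun x y => congrArg π (hact_iso g x y), fun g => ?_⟩
  obtain ⟨x, hx⟩ := (hℓ g).2
  exact ⟨Quot.mk _ x, (hπ_ker _).2 (hx ▸ hℓΛ' g)⟩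

/-- Let a group `G` act by isometries on a `Λ`-tree `T` with translation length function `ℓ`,
and let `Λ' ⊆ Λ` be a convex subgroup with `ℓ(G) ⊆ Λ'`.  Let `M` (together with the
monotone surjection `π : Λ → M` with kernel `Λ'`) realize the ordered quotient group `Λ/Λ'`.
Then the quotient `T₀ = T/~`, where `x ~ y` iff `d x y ∈ Λ'`, carries a `(Λ/Λ')`-valued
distance `d₀` with `d₀ ⟦x⟧ ⟦y⟧ = π (d x y)` making it a `(Λ/Λ')`-tree, and the induced
action of `G` on `T₀` is by isometries with identically zero translation length function. -/
theorem quotient_tree_of_convex_subgroup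
    {Λ T M G : Type*} [AddCommGroup Λ] [LinearOrder Λ] [IsOrderedAddMonoid Λ] [AddCommGroup M] [LinearOrder M] [IsOrderedAddMonoid M] [Group G]
    (d : T → T → Λ) (hT : IsLambdaTree d)
    (act : G → T → T)
    (hact_one : ∀ x : T, act 1 x = x)
    (hact_mul : ∀ (g h : G) (x : T), act (g * h) x = act g (act h x))
    (hact_iso : ∀ (g : G) (x y : T), d (act g x) (act g y) = d x y)
    (ℓ : G → Λ)
    (hℓ : ∀ g : G, (∀ x : T, ℓ g ≤ d x (act g x)) ∧ ∃ x : T, d x (act g x) = ℓ g)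
    (Λ' : AddSubgroup Λ) (hconv : IsConvexSubgroup Λ')
    (hℓΛ' : ∀ g : G, ℓ g ∈ Λ')
    (π : Λ →+ M) (hπ_mono : Monotone π) (hπ_surj : Function.Surjective π)
    (hπ_ker : ∀ x : Λ, π x = 0 ↔ x ∈ Λ') :
    ∃ d₀ : Quot (fun x y : T => d x y ∈ Λ') → Quot (fun x y : T => d x y ∈ Λ') → M,
      (∀ x y : T, d₀ (Quot.mk _ x) (Quot.mk _ y) = π (d x y)) ∧
      IsLambdaTree d₀ ∧
      ∃ act₀ : G → Quot (fun x y : T => d x y ∈ Λ') → Quot (fun x y : T => d x y ∈ Λ'),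
        (∀ (g : G) (x : T), act₀ g (Quot.mk _ x) = Quot.mk _ (act g x)) ∧
        (∀ (g : G) (q q' : Quot (fun x y : T => d x y ∈ Λ')),
          d₀ (act₀ g q) (act₀ g q') = d₀ q q') ∧
        ∀ g : G, ∃ q : Quot (fun x y : T => d x y ∈ Λ'), d₀ q (act₀ g q) = 0 :=
  quotient_tree_of_convex_subgroup_general d hT act hact_iso ℓ hℓ Λ' hℓΛ' π hπ_mono hπ_surj hπ_ker
end
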